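/- arXiv:1709.09042 — 4 statements merged into one kernel-verified Lean document; each statement's English description precedes it below -/
import Mathlib

section
/- Let A be a real 2×2 matrix satisfying the ellipticity condition a_{ij} ξ_i ξ_j ≥ λ|ξ|² for all ξ ∈ ℝ² with λ ∈ (0,1]. Define η = [(a_{11} - a_{22}) + i(a_{12} + a_{21})]/det(A + I) and ν = [(det A - 1) + i(a_{21} - a_{12})]/det(A + I). Then |η| + |ν| ≤ K where K = (√(tr(A)² - 4λ²) + √((det A + 1)² - 4λ²))/(tr A + det A + 1), and K < 1. -/
/-!
Ellipticity of `A` says that its symmetric part has eigenvalues at least `λ`; in particular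
`4λ² + (a₁₂ + a₂₁)² ≤ 4 a₁₁ a₂₂`. This single inequality is exactly what bounds `|η|² d²` by
`(tr A)² - 4λ²` and `|ν|² d²` by `(det A + 1)² - 4λ²`, and `K < 1` because both square roots
drop a positive `4λ²` below the squares of the positive numbers `tr A` and `det A + 1`,
whose sum is `d`.
-/

def IsElliptic (lam a11 a12 a21 a22 : ℝ) : Prop :=
  ∀ ξ1 ξ2 : ℝ, lam * (ξ1 ^ 2 + ξ2 ^ 2) ≤
    a11 * ξ1 ^ 2 + a12 * ξ1 * ξ2 + a21 * ξ2 * ξ1 + a22 * ξ2 ^ 2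

namespace IsElliptic

variable {lam a11 a12 a21 a22 : ℝ}

theorem le_a11 (h : IsElliptic lam a11 a12 a21 a22) : lam ≤ a11 := by
  have := h 1 0; linarith

theorem le_a22 (h : IsElliptic lam a11 a12 a21 a22) : lam ≤ a22 := by
  have := h 0 1; linarith

theorem sq_add_sq_le_four_mul (h : IsElliptic lam a11 a12 a21 a22) (hlam : 0 ≤ lam) :
    4 * lam ^ 2 + (a12 + a21) ^ 2 ≤ 4 * (a11 * a22) := by
  have hdisc : discrim (a11 - lam) (a12 + a21) (a22 - lam) ≤ 0 :=
    discrim_le_zero fun x => by have := h x 1; nlinarith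
  have htrace : 0 ≤ lam * (a11 + a22 - 2 * lam) :=
    mul_nonneg hlam (by linarith [h.le_a11, h.le_a22])
  rw [discrim] at hdisc
  nlinarith

theorem sq_le_det (h : IsElliptic lam a11 a12 a21 a22) (hlam : 0 ≤ lam) :
    lam ^ 2 ≤ a11 * a22 - a12 * a21 := by
  nlinarith [h.sq_add_sq_le_four_mul hlam, sq_nonneg (a12 - a21)]

end IsElliptic

theorem Complex.norm_ofReal_div_add_I_mul_le {x y d N : ℝ} (hd : 0 < d)
    (hxy : x ^ 2 + y ^ 2 ≤ N) :
    ‖((x / d : ℝ) : ℂ) + Complex.I * ((y / d : ℝ) : ℂ)‖ ≤ Real.sqrt N / d := by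
  rw [mul_comm Complex.I, Complex.norm_add_mul_I, div_pow, div_pow, ← add_div,
    Real.sqrt_div' _ (sq_nonneg d), Real.sqrt_sq hd.le]
  gcongr

theorem Real.sqrt_sq_sub_lt {t c : ℝ} (ht : 0 < t) (hc : 0 < c) : Real.sqrt (t ^ 2 - c) < t :=
  (Real.sqrt_lt' ht).2 (by linarith)

theorem stmt1_general (a11 a12 a21 a22 lam : ℝ) (hlam : 0 < lam)
    (hell : ∀ ξ1 ξ2 : ℝ,
      lam * (ξ1 ^ 2 + ξ2 ^ 2) ≤
        a11 * ξ1 ^ 2 + a12 * ξ1 * ξ2 + a21 * ξ2 * ξ1 + a22 * ξ2 ^ 2) :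
    let d : ℝ := (a11 * a22 - a12 * a21) + (a11 + a22) + 1
    let η : ℂ := (((a11 - a22) / d : ℝ) : ℂ) + Complex.I * (((a12 + a21) / d : ℝ) : ℂ)
    let ν : ℂ := (((a11 * a22 - a12 * a21 - 1) / d : ℝ) : ℂ) +
      Complex.I * (((a21 - a12) / d : ℝ) : ℂ)
    let K : ℝ := (Real.sqrt ((a11 + a22) ^ 2 - 4 * lam ^ 2) +
      Real.sqrt ((a11 * a22 - a12 * a21 + 1) ^ 2 - 4 * lam ^ 2)) / d
    ‖η‖ + ‖ν‖ ≤ K ∧ K < 1 := by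
  intro d η ν K
  have hA : IsElliptic lam a11 a12 a21 a22 := hell
  have hkey := hA.sq_add_sq_le_four_mul hlam.le
  have hdet := hA.sq_le_det hlam.le
  have htrace : 0 < a11 + a22 := by linarith [hA.le_a11, hA.le_a22]
  have hdetpos : 0 < a11 * a22 - a12 * a21 + 1 := by linarith [sq_nonneg lam]
  have hd : 0 < d := by linarith
  have hη : ‖η‖ ≤ Real.sqrt ((a11 + a22) ^ 2 - 4 * lam ^ 2) / d :=
    Complex.norm_ofReal_div_add_I_mul_le hd (by linarith)
  have hν : ‖ν‖ ≤ Real.sqrt ((a11 * a22 - a12 * a21 + 1) ^ 2 - 4 * lam ^ 2) / d :=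
    Complex.norm_ofReal_div_add_I_mul_le hd (by nlinarith)
  refine ⟨(add_le_add hη hν).trans_eq (add_div _ _ d).symm, ?_⟩
  rw [div_lt_one hd]
  have hlam2 : 0 < 4 * lam ^ 2 := by positivity
  linarith [Real.sqrt_sq_sub_lt htrace hlam2, Real.sqrt_sq_sub_lt hdetpos hlam2]

/-- Bound on the Beltrami coefficients associated to an elliptic matrix. -/
theorem stmt1 (a11 a12 a21 a22 lam : ℝ) (hlam : 0 < lam) (hlam1 : lam ≤ 1)
    (hell : ∀ ξ1 ξ2 : ℝ,
      lam * (ξ1 ^ 2 + ξ2 ^ 2) ≤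
        a11 * ξ1 ^ 2 + a12 * ξ1 * ξ2 + a21 * ξ2 * ξ1 + a22 * ξ2 ^ 2) :
    let d : ℝ := (a11 * a22 - a12 * a21) + (a11 + a22) + 1
    let η : ℂ := (((a11 - a22) / d : ℝ) : ℂ) + Complex.I * (((a12 + a21) / d : ℝ) : ℂ)
    let ν : ℂ := (((a11 * a22 - a12 * a21 - 1) / d : ℝ) : ℂ) +
      Complex.I * (((a21 - a12) / d : ℝ) : ℂ)
    let K : ℝ := (Real.sqrt ((a11 + a22) ^ 2 - 4 * lam ^ 2) +
      Real.sqrt ((a11 * a22 - a12 * a21 + 1) ^ 2 - 4 * lam ^ 2)) / d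
    ‖η‖ + ‖ν‖ ≤ K ∧ K < 1 :=
  stmt1_general a11 a12 a21 a22 lam hlam hell
end

section
/- Let u(x,y) = exp(-r) where r = √(x²+y²), and define V = (1/3)(1 - r^{-1}), W₁ = (1/3)(x/r, y/r), W₂ = -(1/3)(1 - r^{-1})(x/r, y/r). Then -div(∇u + W₁u) + W₂·∇u + Vu = 0 on ℝ² \ {0}, W₁ is curl-free, and V - W₁·W₂ ≥ 0 everywhere on ℝ² \ {0} where r ≥ 1. -/
/-!
All fields are radial. Away from the origin `∇u + W₁u = -(2/3) e^{-r} (x, y) / r`, and a radial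
field `h(r) (x, y)` has divergence `r h'(r) + 2 h(r)`, so the equation collapses to an identity in
the single variable `r`. Such a field is curl-free because `∂_y (h(r) x) = h'(r) x y / r` is
symmetric in `x` and `y`; this applies to `W₁ = (3r)⁻¹ (x, y)`. Finally
`V - W₁·W₂ = (1 - r⁻¹) (1/3 + (x² + y²) / (9 r²))`, which is nonnegative for `r ≥ 1`.
-/

/-- Partial derivative in the first variable. -/
noncomputable def pdx (f : ℝ × ℝ → ℝ) (p : ℝ × ℝ) : ℝ :=
  deriv (fun x => f (x, p.2)) p.1

/-- Partial derivative in the second variable. -/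
noncomputable def pdy (f : ℝ × ℝ → ℝ) (p : ℝ × ℝ) : ℝ :=
  deriv (fun y => f (p.1, y)) p.2

open Filter Topology

lemma Real.hasDerivAt_exp_neg (x : ℝ) :
    HasDerivAt (fun x => Real.exp (-x)) (-Real.exp (-x)) x := by
  simpa using (hasDerivAt_neg x).exp

lemma Real.hasDerivAt_exp_neg_div {x : ℝ} (hx : x ≠ 0) :
    HasDerivAt (fun x => Real.exp (-x) / x) (-Real.exp (-x) * (x + 1) / x ^ 2) x := by
  refine ((Real.hasDerivAt_exp_neg x).div (hasDerivAt_id' x) hx).congr_deriv ?_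
  ring

/-- The Euclidean norm (the norm of `ℝ × ℝ` is the sup norm). -/
noncomputable def radius (p : ℝ × ℝ) : ℝ := √(p.1 ^ 2 + p.2 ^ 2)

lemma radius_swap (p : ℝ × ℝ) : radius p.swap = radius p := by
  simp only [radius, Prod.fst_swap, Prod.snd_swap, add_comm]

lemma sq_radius (p : ℝ × ℝ) : radius p ^ 2 = p.1 ^ 2 + p.2 ^ 2 :=
  Real.sq_sqrt (by positivity)

lemma radius_pos {p : ℝ × ℝ} (hp : p ≠ 0) : 0 < radius p := by
  refine Real.sqrt_pos.2 ?_
  rcases p with ⟨x, y⟩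
  by_cases hx : x = 0
  · have hy : y ≠ 0 := fun hy => hp (by simp [hx, hy])
    positivity
  · positivity

lemma Prod.swap_ne_zero {α β : Type*} [Zero α] [Zero β] {p : α × β} (hp : p ≠ 0) :
    p.swap ≠ 0 :=
  fun h => hp (by simpa using congrArg Prod.swap h)

lemma pdy_eq_pdx_swap (f : ℝ × ℝ → ℝ) (p : ℝ × ℝ) :
    pdy f p = pdx (fun q => f q.swap) p.swap :=
  rfl

lemma pdx_congr_of_ne_zero {f g : ℝ × ℝ → ℝ} (hfg : ∀ q ≠ 0, f q = g q) {p : ℝ × ℝ}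
    (hp : p ≠ 0) : pdx f p = pdx g p := by
  have hline : ∀ᶠ t in 𝓝 p.1, ((t, p.2) : ℝ × ℝ) ≠ 0 :=
    (continuous_id.prodMk continuous_const).continuousAt.eventually_ne hp
  exact EventuallyEq.deriv_eq (hline.mono fun t ht => hfg _ ht)

lemma pdy_congr_of_ne_zero {f g : ℝ × ℝ → ℝ} (hfg : ∀ q ≠ 0, f q = g q) {p : ℝ × ℝ}
    (hp : p ≠ 0) : pdy f p = pdy g p :=
  pdx_congr_of_ne_zero (fun q hq => hfg q.swap (Prod.swap_ne_zero hq)) (Prod.swap_ne_zero hp)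

section Radial

variable {φ h : ℝ → ℝ} {φ' h' : ℝ} {p : ℝ × ℝ}

lemma hasDerivAt_radius_line (hp : p ≠ 0) :
    HasDerivAt (fun t => radius (t, p.2)) (p.1 / radius p) p.1 := by
  have hr := (radius_pos hp).ne'
  have hsq : HasDerivAt (fun t : ℝ => t ^ 2 + p.2 ^ 2) (2 * p.1) p.1 := by
    simpa using (hasDerivAt_pow 2 p.1).add_const (p.2 ^ 2)
  refine ((Real.hasDerivAt_sqrt (sq_radius p ▸ pow_ne_zero 2 hr)).comp p.1 hsq).congr_deriv ?_
  rw [radius] at hr ⊢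
  field_simp

lemma hasDerivAt_comp_radius_line (hp : p ≠ 0) (hφ : HasDerivAt φ φ' (radius p)) :
    HasDerivAt (fun t => φ (radius (t, p.2))) (φ' * (p.1 / radius p)) p.1 :=
  hφ.comp p.1 (hasDerivAt_radius_line hp)

lemma pdx_comp_radius (hp : p ≠ 0) (hφ : HasDerivAt φ φ' (radius p)) :
    pdx (fun q => φ (radius q)) p = φ' * (p.1 / radius p) :=
  (hasDerivAt_comp_radius_line hp hφ).deriv

lemma pdy_comp_radius (hp : p ≠ 0) (hφ : HasDerivAt φ φ' (radius p)) :
    pdy (fun q => φ (radius q)) p = φ' * (p.2 / radius p) := by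
  simpa only [pdy_eq_pdx_swap, radius_swap, Prod.fst_swap] using
    pdx_comp_radius (p := p.swap) (Prod.swap_ne_zero hp) (by rwa [radius_swap])

lemma pdx_radial_mul_fst (hp : p ≠ 0) (hh : HasDerivAt h h' (radius p)) :
    pdx (fun q => h (radius q) * q.1) p = h' * p.1 ^ 2 / radius p + h (radius p) := by
  refine (((hasDerivAt_comp_radius_line hp hh).mul (hasDerivAt_id p.1))).deriv.trans ?_
  simp only [id]
  ring

lemma pdy_radial_mul_snd (hp : p ≠ 0) (hh : HasDerivAt h h' (radius p)) :
    pdy (fun q => h (radius q) * q.2) p = h' * p.2 ^ 2 / radius p + h (radius p) := by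
  simpa only [pdy_eq_pdx_swap, radius_swap, Prod.fst_swap, Prod.snd_swap] using
    pdx_radial_mul_fst (p := p.swap) (Prod.swap_ne_zero hp) (by rwa [radius_swap])

lemma pdx_radial_mul_fst_add_pdy_radial_mul_snd (hp : p ≠ 0)
    (hh : HasDerivAt h h' (radius p)) :
    pdx (fun q => h (radius q) * q.1) p + pdy (fun q => h (radius q) * q.2) p =
      h' * radius p + 2 * h (radius p) := by
  have hr := radius_pos hp
  rw [pdx_radial_mul_fst hp hh, pdy_radial_mul_snd hp hh]
  field_simp
  linear_combination (-h') * sq_radius p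

lemma pdy_radial_mul_fst (hp : p ≠ 0) (hh : HasDerivAt h h' (radius p)) :
    pdy (fun q => h (radius q) * q.1) p = h' * (p.1 * p.2) / radius p := by
  show deriv (fun y => h (radius (p.1, y)) * p.1) p.2 = _
  rw [deriv_mul_const_field, show deriv (fun y => h (radius (p.1, y))) p.2 = _ from
    pdy_comp_radius hp hh]
  ring

lemma pdy_radial_mul_fst_eq_pdx_radial_mul_snd (hp : p ≠ 0)
    (hh : DifferentiableAt ℝ h (radius p)) :
    pdy (fun q => h (radius q) * q.1) p = pdx (fun q => h (radius q) * q.2) p := by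
  replace hh := hh.hasDerivAt
  have hswap := pdy_radial_mul_fst (p := p.swap) (Prod.swap_ne_zero hp) (by rwa [radius_swap])
  simp only [pdy_eq_pdx_swap, radius_swap, Prod.fst_swap, Prod.snd_swap, Prod.swap_swap] at hswap
  rw [pdy_radial_mul_fst hp hh, hswap, mul_comm p.2]

end Radial

/-- With `u = exp(-r)`, `V = (1/3)(1 - r⁻¹)`, `W₁ = (1/3)(x/r, y/r)`,
`W₂ = -(1/3)(1 - r⁻¹)(x/r, y/r)`, one has
`-div(∇u + W₁u) + W₂·∇u + Vu = 0` and `W₁` is curl-free on `ℝ² \ {0}`,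
and `V - W₁·W₂ ≥ 0` where `r ≥ 1`. -/
theorem stmt6 :
    let r : ℝ × ℝ → ℝ := fun p => Real.sqrt (p.1 ^ 2 + p.2 ^ 2)
    let u : ℝ × ℝ → ℝ := fun p => Real.exp (-r p)
    let V : ℝ × ℝ → ℝ := fun p => (1 / 3) * (1 - (r p)⁻¹)
    let W11 : ℝ × ℝ → ℝ := fun p => (1 / 3) * (p.1 / r p)
    let W12 : ℝ × ℝ → ℝ := fun p => (1 / 3) * (p.2 / r p)
    let W21 : ℝ × ℝ → ℝ := fun p => -(1 / 3) * (1 - (r p)⁻¹) * (p.1 / r p)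
    let W22 : ℝ × ℝ → ℝ := fun p => -(1 / 3) * (1 - (r p)⁻¹) * (p.2 / r p)
    (∀ p : ℝ × ℝ, p ≠ 0 →
        -(pdx (fun q => pdx u q + W11 q * u q) p +
            pdy (fun q => pdy u q + W12 q * u q) p) +
          (W21 p * pdx u p + W22 p * pdy u p) + V p * u p = 0) ∧
      (∀ p : ℝ × ℝ, p ≠ 0 → pdy W11 p - pdx W12 p = 0) ∧
      (∀ p : ℝ × ℝ, 1 ≤ r p →
        0 ≤ V p - (W11 p * W21 p + W12 p * W22 p)) := by
  intro r u V W11 W12 W21 W22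
  have hr : r = radius := rfl
  clear_value r
  subst hr
  have hu_x (q : ℝ × ℝ) (hq : q ≠ 0) : pdx u q = -Real.exp (-radius q) * (q.1 / radius q) :=
    pdx_comp_radius hq (Real.hasDerivAt_exp_neg _)
  have hu_y (q : ℝ × ℝ) (hq : q ≠ 0) : pdy u q = -Real.exp (-radius q) * (q.2 / radius q) :=
    pdy_comp_radius hq (Real.hasDerivAt_exp_neg _)
  refine ⟨fun p hp => ?_, fun p hp => ?_, fun p hp => ?_⟩
  · have hr := radius_pos hp
    have hflux := (Real.hasDerivAt_exp_neg_div hr.ne').const_mul (-(2 / 3) : ℝ)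
    have hflux_x : pdx (fun q => pdx u q + W11 q * u q) p =
        pdx (fun q => -(2 / 3) * (Real.exp (-radius q) / radius q) * q.1) p :=
      pdx_congr_of_ne_zero (fun q hq => by simp only [hu_x q hq, W11, u]; ring) hp
    have hflux_y : pdy (fun q => pdy u q + W12 q * u q) p =
        pdy (fun q => -(2 / 3) * (Real.exp (-radius q) / radius q) * q.2) p :=
      pdy_congr_of_ne_zero (fun q hq => by simp only [hu_y q hq, W12, u]; ring) hp
    rw [hflux_x, hflux_y, pdx_radial_mul_fst_add_pdy_radial_mul_snd hp hflux, hu_x p hp,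
      hu_y p hp]
    simp only [V, W21, W22, u]
    field_simp
    rw [← sq_radius p]
    ring
  · have hW11 : W11 = fun q => (3 * radius q)⁻¹ * q.1 :=
      funext fun q => by simp only [W11]; ring
    have hW12 : W12 = fun q => (3 * radius q)⁻¹ * q.2 :=
      funext fun q => by simp only [W12]; ring
    have hinv : DifferentiableAt ℝ (fun s : ℝ => (3 * s)⁻¹) (radius p) :=
      (differentiableAt_id.const_mul 3).inv (by simpa using (radius_pos hp).ne')
    rw [hW11, hW12, pdy_radial_mul_fst_eq_pdx_radial_mul_snd hp hinv, sub_self]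
  · have hV : 0 ≤ 1 - (radius p)⁻¹ := sub_nonneg.2 (inv_le_one_of_one_le₀ hp)
    calc 0 ≤ (1 - (radius p)⁻¹) *
          (1 / 3 + 1 / 9 * ((p.1 / radius p) ^ 2 + (p.2 / radius p) ^ 2)) :=
          mul_nonneg hV (by positivity)
      _ = _ := by simp only [V, W11, W12, W21, W22]; ring
end

section
/- Three-ball inequality corollary: Under the hypotheses of the Hadamard three-quasi-circle theorem, for 0 < s₁ < s₂ < s₃ < s₀, one has ‖f‖_{L^∞(Q_{s₂})} ≤ ‖f‖_{L^∞(Q_{s₁})}^θ · ‖f‖_{L^∞(Q_{s₃})}^{1-θ}, where θ = log(s₃/s₂)/log(s₃/s₁). -/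
open Real

lemma le_rpow_mul_rpow_of_log_le {x y z θ : ℝ} (hx : 0 < x) (hy : 0 < y) (hz : 0 < z)
    (h : log x ≤ θ * log y + (1 - θ) * log z) : x ≤ y ^ θ * z ^ (1 - θ) :=
  calc x = exp (log x) := (exp_log hx).symm
    _ ≤ exp (θ * log y + (1 - θ) * log z) := exp_le_exp.2 h
    _ = y ^ θ * z ^ (1 - θ) := by
      rw [exp_add, rpow_def_of_pos hy, rpow_def_of_pos hz, mul_comm (log y), mul_comm (log z)]

lemma le_div_mul_add_one_sub_div_mul {a b u v w : ℝ} (hab : 0 < a + b)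
    (h : (a + b) * u ≤ a * v + b * w) :
    u ≤ a / (a + b) * v + (1 - a / (a + b)) * w := by
  have hb : 1 - a / (a + b) = b / (a + b) := by field_simp; ring
  rw [hb, div_mul_eq_mul_div, div_mul_eq_mul_div, ← add_div, le_div_iff₀ hab]
  linarith

lemma log_div_add_log_div {r s t : ℝ} (hr : 0 < r) (hs : 0 < s) (ht : 0 < t) :
    log (t / s) + log (s / r) = log (t / r) := by
  rw [← log_mul (by positivity) (by positivity), div_mul_div_cancel₀ hs.ne']

theorem stmt9_general (s₀ : ℝ) (N : ℝ → ℝ)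
    (hpos : ∀ s : ℝ, 0 < s → s < s₀ → 0 < N s)
    (hconv : ∀ s₁ s₂ s₃ : ℝ, 0 < s₁ → s₁ < s₂ → s₂ < s₃ → s₃ < s₀ →
      Real.log (s₃ / s₁) * Real.log (N s₂) ≤
        Real.log (s₃ / s₂) * Real.log (N s₁) +
          Real.log (s₂ / s₁) * Real.log (N s₃)) :
    ∀ s₁ s₂ s₃ : ℝ, 0 < s₁ → s₁ < s₂ → s₂ < s₃ → s₃ < s₀ →
      N s₂ ≤ N s₁ ^ (Real.log (s₃ / s₂) / Real.log (s₃ / s₁)) *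
        N s₃ ^ (1 - Real.log (s₃ / s₂) / Real.log (s₃ / s₁)) := by
  intro s₁ s₂ s₃ h1 h12 h23 h30
  have h2 : 0 < s₂ := h1.trans h12
  have h3 : 0 < s₃ := h2.trans h23
  have hsplit := log_div_add_log_div h1 h2 h3
  have hlog : 0 < log (s₃ / s₁) := log_pos ((one_lt_div h1).2 (h12.trans h23))
  apply le_rpow_mul_rpow_of_log_le (hpos s₂ h2 (h23.trans h30))
    (hpos s₁ h1 (h12.trans (h23.trans h30))) (hpos s₃ h3 h30)
  rw [← hsplit] at hlog ⊢
  apply le_div_mul_add_one_sub_div_mul hlog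
  rw [hsplit]
  exact hconv s₁ s₂ s₃ h1 h12 h23 h30

/-- Three-ball inequality on quasi-balls: from the logarithmic convexity of
`N s = ‖f‖_{L^∞(Q_s)}` one obtains
`‖f‖_{L^∞(Q_{s₂})} ≤ ‖f‖_{L^∞(Q_{s₁})}^θ ‖f‖_{L^∞(Q_{s₃})}^{1-θ}` with
`θ = log(s₃/s₂)/log(s₃/s₁)`. -/
theorem stmt9 (G : ℂ → ℝ) (f : ℂ → ℂ) (s₀ : ℝ) (N : ℝ → ℝ)
    (hN : ∀ s : ℝ, N s = sSup ((fun z => ‖f z‖) '' {z | G z ≤ Real.log s}))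
    (hpos : ∀ s : ℝ, 0 < s → s < s₀ → 0 < N s)
    (hconv : ∀ s₁ s₂ s₃ : ℝ, 0 < s₁ → s₁ < s₂ → s₂ < s₃ → s₃ < s₀ →
      Real.log (s₃ / s₁) * Real.log (N s₂) ≤
        Real.log (s₃ / s₂) * Real.log (N s₁) +
          Real.log (s₂ / s₁) * Real.log (N s₃)) :
    ∀ s₁ s₂ s₃ : ℝ, 0 < s₁ → s₁ < s₂ → s₂ < s₃ → s₃ < s₀ →
      N s₂ ≤ N s₁ ^ (Real.log (s₃ / s₂) / Real.log (s₃ / s₁)) *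
        N s₃ ^ (1 - Real.log (s₃ / s₂) / Real.log (s₃ / s₁)) :=
  stmt9_general s₀ N hpos hconv
end

section
/- Quotient transformation: Let u, φ be C² functions on Ω ⊂ ℝ² with φ > 0, where u solves div(∇u + W₁u) = W₂·∇u + Vu and φ solves Δφ - (W₁ + W₂)·∇φ - (V - W₁·W₂)φ = 0. Then v = u/φ satisfies div(∇v + W₁v) + W₁·∇v + |W₁|²v = W₃·(∇v + W₁v), where W₃ = W₁ + W₂ - 2∇φ/φ. -/
open Set

section LineDeriv

variable {𝕜 E : Type*} [NontriviallyNormedField 𝕜] [NormedAddCommGroup E] [NormedSpace 𝕜 E]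
  {s : Set E} {f g u φ w A : E → 𝕜} {x v : E}

theorem lineDeriv_fun_add (hf : DifferentiableAt 𝕜 f x) (hg : DifferentiableAt 𝕜 g x) :
    lineDeriv 𝕜 (fun y => f y + g y) x v = lineDeriv 𝕜 f x v + lineDeriv 𝕜 g x v := by
  rw [(hf.fun_add hg).lineDeriv_eq_fderiv, hf.lineDeriv_eq_fderiv, hg.lineDeriv_eq_fderiv,
    fderiv_fun_add hf hg, add_apply]

theorem lineDeriv_fun_mul (hf : DifferentiableAt 𝕜 f x) (hg : DifferentiableAt 𝕜 g x) :
    lineDeriv 𝕜 (fun y => f y * g y) x v = lineDeriv 𝕜 f x v * g x + f x * lineDeriv 𝕜 g x v := by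
  rw [(hf.fun_mul hg).lineDeriv_eq_fderiv, hf.lineDeriv_eq_fderiv, hg.lineDeriv_eq_fderiv,
    fderiv_fun_mul hf hg]
  simp only [add_apply, smul_apply, smul_eq_mul]
  ring

theorem lineDeriv_congr_of_eqOn (hs : IsOpen s) (h : EqOn f g s) (hx : x ∈ s) :
    lineDeriv 𝕜 f x v = lineDeriv 𝕜 g x v :=
  (h.eventuallyEq_of_mem (hs.mem_nhds hx)).lineDeriv_eq

theorem ContDiffOn.lineDeriv {n : WithTop ℕ∞} (hf : ContDiffOn 𝕜 (n + 1) f s)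
    (hs : IsOpen s) (v : E) : ContDiffOn 𝕜 n (fun y => lineDeriv 𝕜 f y v) s := by
  refine ((hf.fderiv_of_isOpen hs le_rfl).clm_apply (contDiffOn_const (c := v))).congr
    fun y hy => ?_
  exact ((hf.differentiableOn (by simp)).differentiableAt (hs.mem_nhds hy)).lineDeriv_eq_fderiv

theorem lineDeriv_eq_of_eqOn_mul (hs : IsOpen s) (hφ : DifferentiableOn 𝕜 φ s)
    (hw : DifferentiableOn 𝕜 w s) (hu : EqOn u (fun y => φ y * w y) s) (hx : x ∈ s) :
    lineDeriv 𝕜 u x v = lineDeriv 𝕜 φ x v * w x + φ x * lineDeriv 𝕜 w x v :=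
  (lineDeriv_congr_of_eqOn hs hu hx).trans <|
    lineDeriv_fun_mul (hφ.differentiableAt (hs.mem_nhds hx)) (hw.differentiableAt (hs.mem_nhds hx))

theorem lineDeriv_flux_eq_of_eqOn_mul (hs : IsOpen s) (hφ : ContDiffOn 𝕜 2 φ s)
    (hw : ContDiffOn 𝕜 2 w s) (hA : DifferentiableOn 𝕜 A s) (hu : EqOn u (fun y => φ y * w y) s)
    (hx : x ∈ s) :
    lineDeriv 𝕜 (fun y => lineDeriv 𝕜 u y v + A y * u y) x v =
      φ x * lineDeriv 𝕜 (fun y => lineDeriv 𝕜 w y v + A y * w y) x v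
        + 2 * lineDeriv 𝕜 φ x v * lineDeriv 𝕜 w x v
        + lineDeriv 𝕜 (fun y => lineDeriv 𝕜 φ y v) x v * w x
        + A x * lineDeriv 𝕜 φ x v * w x := by
  have hx' := hs.mem_nhds hx
  have hφ₁ := hφ.differentiableOn (by simp)
  have hw₁ := hw.differentiableOn (by simp)
  have hφx := hφ₁.differentiableAt hx'
  have hwx := hw₁.differentiableAt hx'
  have hAx := hA.differentiableAt hx'
  have hφ'x := ((hφ.lineDeriv hs v).differentiableOn one_ne_zero).differentiableAt hx'
  have hw'x := ((hw.lineDeriv hs v).differentiableOn one_ne_zero).differentiableAt hx'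
  have hflux : EqOn (fun y => lineDeriv 𝕜 u y v + A y * u y)
      (fun y => (lineDeriv 𝕜 φ y v * w y + φ y * lineDeriv 𝕜 w y v) + A y * (φ y * w y)) s :=
    fun y hy => by dsimp only; rw [lineDeriv_eq_of_eqOn_mul hs hφ₁ hw₁ hu hy, hu hy]
  rw [lineDeriv_congr_of_eqOn hs hflux hx]
  simp (disch := fun_prop) only [lineDeriv_fun_add, lineDeriv_fun_mul]
  ring

end LineDeriv

theorem pdx_eq_lineDeriv (f : ℝ × ℝ → ℝ) (p : ℝ × ℝ) : pdx f p = lineDeriv ℝ f p (1, 0) := by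
  have : (fun t : ℝ => f (p + t • ((1 : ℝ), (0 : ℝ)))) = fun t => f (p.1 + t, p.2) := by
    ext t; congr 1; ext <;> simp
  rw [pdx, lineDeriv, this]
  exact ((deriv_comp_const_add (fun x => f (x, p.2)) p.1 0).trans (by simp)).symm

theorem pdy_eq_lineDeriv (f : ℝ × ℝ → ℝ) (p : ℝ × ℝ) : pdy f p = lineDeriv ℝ f p (0, 1) := by
  have : (fun t : ℝ => f (p + t • ((0 : ℝ), (1 : ℝ)))) = fun t => f (p.1, p.2 + t) := by
    ext t; congr 1; ext <;> simp
  rw [pdy, lineDeriv, this]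
  exact ((deriv_comp_const_add (fun y => f (p.1, y)) p.2 0).trans (by simp)).symm

theorem stmt16_general (Ω : Set (ℝ × ℝ)) (hΩ : IsOpen Ω)
    (W11 W12 W21 W22 V u φ : ℝ × ℝ → ℝ)
    (hW11 : ContDiffOn ℝ 1 W11 Ω) (hW12 : ContDiffOn ℝ 1 W12 Ω)
    (hu : ContDiffOn ℝ 2 u Ω) (hφ : ContDiffOn ℝ 2 φ Ω)
    (hφpos : ∀ p ∈ Ω, 0 < φ p)
    (hueq : ∀ p ∈ Ω,
      pdx (fun q => pdx u q + W11 q * u q) p +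
          pdy (fun q => pdy u q + W12 q * u q) p =
        (W21 p * pdx u p + W22 p * pdy u p) + V p * u p)
    (hφeq : ∀ p ∈ Ω,
      (pdx (fun q => pdx φ q) p + pdy (fun q => pdy φ q) p) -
          ((W11 p + W21 p) * pdx φ p + (W12 p + W22 p) * pdy φ p) -
          (V p - (W11 p * W21 p + W12 p * W22 p)) * φ p = 0) :
    let v : ℝ × ℝ → ℝ := fun q => u q / φ q
    ∀ p ∈ Ω,
      pdx (fun q => pdx v q + W11 q * v q) p +
          pdy (fun q => pdy v q + W12 q * v q) p +
          (W11 p * pdx v p + W12 p * pdy v p) +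
          (W11 p ^ 2 + W12 p ^ 2) * v p =
        (W11 p + W21 p - 2 * pdx φ p / φ p) * (pdx v p + W11 p * v p) +
          (W12 p + W22 p - 2 * pdy φ p / φ p) * (pdy v p + W12 p * v p) := by
  intro v p hp
  have hφ0 : ∀ q ∈ Ω, φ q ≠ 0 := fun q hq => (hφpos q hq).ne'
  have hv : ContDiffOn ℝ 2 v Ω := hu.div hφ hφ0
  have hfac : EqOn u (fun q => φ q * v q) Ω := fun q hq => (mul_div_cancel₀ _ (hφ0 q hq)).symm
  clear_value v
  have hφ₁ := hφ.differentiableOn two_ne_zero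
  have hv₁ := hv.differentiableOn two_ne_zero
  have hux := lineDeriv_eq_of_eqOn_mul (v := (1, 0)) hΩ hφ₁ hv₁ hfac hp
  have huy := lineDeriv_eq_of_eqOn_mul (v := (0, 1)) hΩ hφ₁ hv₁ hfac hp
  have hFx := lineDeriv_flux_eq_of_eqOn_mul (v := (1, 0)) hΩ hφ hv
    (hW11.differentiableOn one_ne_zero) hfac hp
  have hFy := lineDeriv_flux_eq_of_eqOn_mul (v := (0, 1)) hΩ hφ hv
    (hW12.differentiableOn one_ne_zero) hfac hp
  have hU := hueq p hp
  have hΦ := hφeq p hp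
  simp only [pdx_eq_lineDeriv, pdy_eq_lineDeriv] at hU hΦ ⊢
  rw [hFx, hFy, hux, huy, hfac hp] at hU
  field_simp [hφ0 p hp]
  linear_combination hU - v p * hΦ

/-- Quotient transformation: if `u` solves `div(∇u + W₁u) = W₂·∇u + Vu` and
`φ > 0` solves `Δφ - (W₁+W₂)·∇φ - (V - W₁·W₂)φ = 0`, then `v = u/φ` satisfies
`div(∇v + W₁v) + W₁·∇v + |W₁|²v = W₃·(∇v + W₁v)` with `W₃ = W₁ + W₂ - 2∇φ/φ`. -/
theorem stmt16 (Ω : Set (ℝ × ℝ)) (hΩ : IsOpen Ω)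
    (W11 W12 W21 W22 V u φ : ℝ × ℝ → ℝ)
    (hW11 : ContDiffOn ℝ 1 W11 Ω) (hW12 : ContDiffOn ℝ 1 W12 Ω)
    (hW21 : ContDiffOn ℝ 1 W21 Ω) (hW22 : ContDiffOn ℝ 1 W22 Ω)
    (hV : ContinuousOn V Ω)
    (hu : ContDiffOn ℝ 2 u Ω) (hφ : ContDiffOn ℝ 2 φ Ω)
    (hφpos : ∀ p ∈ Ω, 0 < φ p)
    (hueq : ∀ p ∈ Ω,
      pdx (fun q => pdx u q + W11 q * u q) p +
          pdy (fun q => pdy u q + W12 q * u q) p =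
        (W21 p * pdx u p + W22 p * pdy u p) + V p * u p)
    (hφeq : ∀ p ∈ Ω,
      (pdx (fun q => pdx φ q) p + pdy (fun q => pdy φ q) p) -
          ((W11 p + W21 p) * pdx φ p + (W12 p + W22 p) * pdy φ p) -
          (V p - (W11 p * W21 p + W12 p * W22 p)) * φ p = 0) :
    let v : ℝ × ℝ → ℝ := fun q => u q / φ q
    ∀ p ∈ Ω,
      pdx (fun q => pdx v q + W11 q * v q) p +
          pdy (fun q => pdy v q + W12 q * v q) p +
          (W11 p * pdx v p + W12 p * pdy v p) +
          (W11 p ^ 2 + W12 p ^ 2) * v p =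
        (W11 p + W21 p - 2 * pdx φ p / φ p) * (pdx v p + W11 p * v p) +
          (W12 p + W22 p - 2 * pdy φ p / φ p) * (pdy v p + W12 p * v p) :=
  stmt16_general Ω hΩ W11 W12 W21 W22 V u φ hW11 hW12 hu hφ hφpos hueq hφeq
end
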